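/- arXiv:2306.04178 — 2 statements merged into one kernel-verified Lean document; each statement's English description precedes it below -/
import Mathlib

section
/- Let Q be a Borel probability measure on ℝ^n, let p ≥ 1 be a real exponent, let ρ ≥ 0, and let L : ℝ^n → ℝ be bounded and continuous. Then the supremum, over all Borel probability measures Q̃ on ℝ^n with W_p(Q̃, Q) ≤ ρ, of ∫ L dQ̃ equals the supremum, over all Borel probability measures γ on ℝ^n × ℝ^n whose first marginal is Q and which satisfy (∫ ‖x − y‖₂^p dγ(x,y))^{1/p} ≤ ρ, of ∫ L(y) dγ(x,y). (This is the reformulation of the Wasserstein-ball distributionally robust objective as an optimization over couplings with bounded transport cost.) -/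
open MeasureTheory
open scoped ENNReal

/-- The `p`-transport cost of a coupling `γ` on `ℝⁿ × ℝⁿ`:
`(∫ ‖x − y‖₂ᵖ dγ(x,y))^{1/p}`, valued in `[0, ∞]`. -/
noncomputable def transportCost {n : ℕ} (p : ℝ)
    (γ : Measure (EuclideanSpace ℝ (Fin n) × EuclideanSpace ℝ (Fin n))) : ℝ≥0∞ :=
  (∫⁻ z, ENNReal.ofReal ‖z.1 - z.2‖ ^ p ∂γ) ^ (1 / p)

/-- The `p`-Wasserstein distance: infimum of the transport cost over all couplings
whose first marginal is `P` and second marginal is `Q`. -/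
noncomputable def wassersteinDist {n : ℕ} (p : ℝ)
    (P Q : Measure (EuclideanSpace ℝ (Fin n))) : ℝ≥0∞ :=
  ⨅ (γ : Measure (EuclideanSpace ℝ (Fin n) × EuclideanSpace ℝ (Fin n)))
    (_ : γ.fst = P) (_ : γ.snd = Q), transportCost p γ

/-!
A coupling `γ` with first marginal `Q` and cost at most `ρ` is, after swapping the factors, a
coupling of its second marginal `Q'` with `Q`, so `W_p(Q', Q) ≤ ρ`: the supremum over couplings
is at most the Wasserstein one.

Conversely the infimum defining `W_p(Q', Q)` need not be attained. For `ρ > 0` take a coupling of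
`Q` and `Q'` of cost below `ρ / t^{1/p}` and mix it, with weights `t` and `1 - t`, with the diagonal
coupling of `Q`, which costs nothing: the mixture has cost at most `ρ` and objective
`t ∫ L dQ' + (1 - t) ∫ L dQ`, which tends to `∫ L dQ'` as `t → 1`. For `ρ = 0`, `W_p(Q', Q) = 0`
forces `Q' = Q`: since `W_1 ≤ W_p`, there are couplings along which the integrals of a bounded
Lipschitz function differ arbitrarily little, and these integrals determine a Borel probability
measure.
-/

open Filter Topology
open scoped NNReal

namespace MeasureTheory

section Coupling

variable {Ω : Type*} [MeasurableSpace Ω]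

lemma integral_le_of_forall_abs_le {μ : Measure Ω} [IsProbabilityMeasure μ] {f : Ω → ℝ} {C : ℝ}
    (h : ∀ x, |f x| ≤ C) : ∫ x, f x ∂μ ≤ C := by
  have := norm_integral_le_of_norm_le_const (μ := μ) (f := f) (ae_of_all _ h)
  simp only [Real.norm_eq_abs, probReal_univ, mul_one] at this
  exact (le_abs_self _).trans this

lemma isProbabilityMeasure_of_fst_eq {γ : Measure (Ω × Ω)} {μ : Measure Ω}
    [IsProbabilityMeasure μ] (h : γ.fst = μ) : IsProbabilityMeasure γ := by
  constructor
  rw [← Measure.fst_univ, h, measure_univ]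

lemma Measure.fst_smul (c : ℝ≥0∞) (γ : Measure (Ω × Ω)) : (c • γ).fst = c • γ.fst :=
  Measure.map_smul c γ Prod.fst

lemma Measure.snd_smul (c : ℝ≥0∞) (γ : Measure (Ω × Ω)) : (c • γ).snd = c • γ.snd :=
  Measure.map_smul c γ Prod.snd

lemma Measure.fst_map_diag (μ : Measure Ω) : (μ.map fun x => (x, x)).fst = μ :=
  (Measure.fst_map_prodMk measurable_id).trans Measure.map_id

lemma Measure.snd_map_diag (μ : Measure Ω) : (μ.map fun x => (x, x)).snd = μ :=
  (Measure.snd_map_prodMk measurable_id).trans Measure.map_id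

variable [PseudoEMetricSpace Ω] [OpensMeasurableSpace Ω]

lemma edist_integral_fst_snd_le_mul_lintegral_edist {f : Ω → ℝ} {K : ℝ≥0}
    (hf : LipschitzWith K f) (hfb : ∃ C, ∀ x y, dist (f x) (f y) ≤ C)
    (γ : Measure (Ω × Ω)) [IsFiniteMeasure γ] :
    edist (∫ x, f x ∂γ.fst) (∫ x, f x ∂γ.snd) ≤ K * ∫⁻ z, edist z.1 z.2 ∂γ := by
  obtain ⟨C, hC⟩ := hfb
  have hfi (μ : Measure Ω) [IsFiniteMeasure μ] : Integrable f μ :=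
    (BoundedContinuousFunction.mkOfBound ⟨f, hf.continuous⟩ C hC).integrable μ
  have hfm (μ : Measure Ω) : AEStronglyMeasurable f μ := hf.continuous.aestronglyMeasurable
  rw [Measure.fst, Measure.snd, integral_map measurable_fst.aemeasurable (hfm _),
    integral_map measurable_snd.aemeasurable (hfm _), edist_eq_enorm_sub,
    ← integral_sub (f := fun z : Ω × Ω => f z.1) (g := fun z => f z.2)
      ((hfi _).comp_measurable measurable_fst) ((hfi _).comp_measurable measurable_snd)]
  calc ‖∫ z, f z.1 - f z.2 ∂γ‖ₑ
      ≤ ∫⁻ z, ‖f z.1 - f z.2‖ₑ ∂γ := enorm_integral_le_lintegral_enorm _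
    _ ≤ ∫⁻ z, K * edist z.1 z.2 ∂γ :=
      lintegral_mono fun z => (edist_eq_enorm_sub (f z.1) (f z.2)).symm.trans_le (hf z.1 z.2)
    _ = K * ∫⁻ z, edist z.1 z.2 ∂γ := lintegral_const_mul' _ _ ENNReal.coe_ne_top

variable [BorelSpace Ω]

lemma ProbabilityMeasure.eq_of_forall_lipschitz_integral_eq {μ ν : ProbabilityMeasure Ω}
    (h : ∀ f : Ω → ℝ, (∃ C, ∀ x y, dist (f x) (f y) ≤ C) → (∃ K, LipschitzWith K f) →
      ∫ x, f x ∂μ = ∫ x, f x ∂ν) : μ = ν :=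
  tendsto_nhds_unique (tendsto_const_nhds (f := (atTop : Filter ℕ)))
    (tendsto_iff_forall_lipschitz_integral_tendsto.2 fun f hfb hf => by
      simpa only [h f hfb hf] using tendsto_const_nhds)

lemma eq_of_iInf_lintegral_edist_eq_zero (μ ν : Measure Ω)
    [IsProbabilityMeasure μ] [IsProbabilityMeasure ν]
    (h : ⨅ (γ : Measure (Ω × Ω)) (_ : γ.fst = μ) (_ : γ.snd = ν),
      ∫⁻ z, edist z.1 z.2 ∂γ = 0) : μ = ν := by
  suffices (⟨μ, ‹_›⟩ : ProbabilityMeasure Ω) = ⟨ν, ‹_›⟩ from congrArg Subtype.val this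
  refine ProbabilityMeasure.eq_of_forall_lipschitz_integral_eq fun f hfb ⟨K, hf⟩ => ?_
  -- `K + 1` rather than `K`, so that multiplication by it commutes with the infimum
  have hK : LipschitzWith (K + 1) f := hf.weaken le_self_add
  have hK0 : ((K + 1 : ℝ≥0) : ℝ≥0∞) ≠ 0 := by simp
  refine edist_le_zero.1 ?_
  calc edist (∫ x, f x ∂μ) (∫ x, f x ∂ν)
      ≤ ⨅ (γ : Measure (Ω × Ω)) (_ : γ.fst = μ) (_ : γ.snd = ν),
          ((K + 1 : ℝ≥0) : ℝ≥0∞) * ∫⁻ z, edist z.1 z.2 ∂γ := by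
        refine le_iInf₂ fun γ hγμ => le_iInf fun hγν => ?_
        have := isProbabilityMeasure_of_fst_eq hγμ
        simpa only [hγμ, hγν] using edist_integral_fst_snd_le_mul_lintegral_edist hK hfb γ
    _ = 0 := by simp only [← ENNReal.mul_iInf_of_ne hK0 ENNReal.coe_ne_top, h, mul_zero]

end Coupling

end MeasureTheory

section Transport

variable {n : ℕ}

local notation "ℝⁿ" => EuclideanSpace ℝ (Fin n)

lemma transportCost_eq_eLpNorm {p : ℝ} (hp : 0 < p) (γ : Measure (ℝⁿ × ℝⁿ)) :
    transportCost p γ = eLpNorm (fun z => z.1 - z.2) (ENNReal.ofReal p) γ := by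
  rw [eLpNorm_eq_lintegral_rpow_enorm_toReal (by simpa using hp) ENNReal.ofReal_ne_top,
    ENNReal.toReal_ofReal hp.le, transportCost]
  simp only [ofReal_norm]

lemma lintegral_edist_le_transportCost {p : ℝ} (hp : 1 ≤ p) (γ : Measure (ℝⁿ × ℝⁿ))
    [IsProbabilityMeasure γ] : ∫⁻ z, edist z.1 z.2 ∂γ ≤ transportCost p γ := by
  simp only [transportCost_eq_eLpNorm (zero_lt_one.trans_le hp), edist_eq_enorm_sub,
    ← eLpNorm_one_eq_lintegral_enorm]
  exact eLpNorm_le_eLpNorm_of_exponent_le (by simpa using hp)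
    (continuous_fst.sub continuous_snd).aestronglyMeasurable

lemma transportCost_map_swap (p : ℝ) (γ : Measure (ℝⁿ × ℝⁿ)) :
    transportCost p (γ.map Prod.swap) = transportCost p γ := by
  rw [transportCost, transportCost, lintegral_map _ measurable_swap]
  · simp only [Prod.fst_swap, Prod.snd_swap, norm_sub_rev]
  · fun_prop

lemma transportCost_smul {p : ℝ} (hp : 0 < p) (c : ℝ≥0∞) (γ : Measure (ℝⁿ × ℝⁿ)) :
    transportCost p (c • γ) = c ^ (1 / p) * transportCost p γ := by
  rw [transportCost, transportCost, lintegral_smul_measure, smul_eq_mul,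
    ENNReal.mul_rpow_of_nonneg _ _ (by positivity)]

lemma transportCost_add_map_diag {p : ℝ} (hp : 0 < p) (γ : Measure (ℝⁿ × ℝⁿ))
    (μ : Measure ℝⁿ) : transportCost p (γ + μ.map fun x => (x, x)) = transportCost p γ := by
  rw [transportCost, transportCost, lintegral_add_measure, lintegral_map _ (by fun_prop)]
  · simp [ENNReal.zero_rpow_of_pos hp]
  · fun_prop

lemma wassersteinDist_le_transportCost {p : ℝ} {P Q : Measure ℝⁿ} {γ : Measure (ℝⁿ × ℝⁿ)}
    (hP : γ.fst = P) (hQ : γ.snd = Q) : wassersteinDist p P Q ≤ transportCost p γ :=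
  iInf_le_of_le γ <| iInf_le_of_le hP <| iInf_le _ hQ

lemma wassersteinDist_snd_fst_le_transportCost (p : ℝ) (γ : Measure (ℝⁿ × ℝⁿ)) :
    wassersteinDist p γ.snd γ.fst ≤ transportCost p γ :=
  (wassersteinDist_le_transportCost Measure.fst_map_swap Measure.snd_map_swap).trans_eq
    (transportCost_map_swap p γ)

lemma exists_transportCost_lt_of_wassersteinDist_lt {p : ℝ} {P Q : Measure ℝⁿ} {c : ℝ≥0∞}
    (h : wassersteinDist p P Q < c) :
    ∃ γ : Measure (ℝⁿ × ℝⁿ), γ.fst = P ∧ γ.snd = Q ∧ transportCost p γ < c := by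
  simpa only [wassersteinDist, iInf_lt_iff, exists_prop] using h

lemma eq_of_wassersteinDist_eq_zero {p : ℝ} (hp : 1 ≤ p) {P Q : Measure ℝⁿ}
    [IsProbabilityMeasure P] [IsProbabilityMeasure Q] (h : wassersteinDist p P Q = 0) :
    P = Q := by
  refine eq_of_iInf_lintegral_edist_eq_zero P Q (le_antisymm ?_ zero_le)
  refine h ▸ iInf_mono fun γ => iInf_mono fun hP => iInf_mono fun _ => ?_
  have := isProbabilityMeasure_of_fst_eq hP
  exact lintegral_edist_le_transportCost hp γ

def wassersteinBallObjectives (Q : Measure ℝⁿ) (p ρ : ℝ) (L : ℝⁿ → ℝ) : Set ℝ :=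
  {r | ∃ Q' : Measure ℝⁿ, IsProbabilityMeasure Q' ∧ wassersteinDist p Q' Q ≤ ENNReal.ofReal ρ ∧
    r = ∫ x, L x ∂Q'}

def couplingObjectives (Q : Measure ℝⁿ) (p ρ : ℝ) (L : ℝⁿ → ℝ) : Set ℝ :=
  {r | ∃ γ : Measure (ℝⁿ × ℝⁿ), IsProbabilityMeasure γ ∧ γ.fst = Q ∧
    transportCost p γ ≤ ENNReal.ofReal ρ ∧ r = ∫ z, L z.2 ∂γ}

lemma bddAbove_couplingObjectives {L : ℝⁿ → ℝ} {C : ℝ} (hLb : ∀ x, |L x| ≤ C)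
    (Q : Measure ℝⁿ) (p ρ : ℝ) : BddAbove (couplingObjectives Q p ρ L) := by
  refine ⟨C, ?_⟩
  rintro _ ⟨γ, hγ, -, -, rfl⟩
  exact integral_le_of_forall_abs_le fun z => hLb z.2

lemma bddAbove_wassersteinBallObjectives {L : ℝⁿ → ℝ} {C : ℝ} (hLb : ∀ x, |L x| ≤ C)
    (Q : Measure ℝⁿ) (p ρ : ℝ) : BddAbove (wassersteinBallObjectives Q p ρ L) := by
  refine ⟨C, ?_⟩
  rintro _ ⟨Q', _, -, rfl⟩
  exact integral_le_of_forall_abs_le hLb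

lemma couplingObjectives_subset_wassersteinBallObjectives {L : ℝⁿ → ℝ} (hLc : Continuous L)
    (Q : Measure ℝⁿ) (p ρ : ℝ) :
    couplingObjectives Q p ρ L ⊆ wassersteinBallObjectives Q p ρ L := by
  rintro _ ⟨γ, hγ, rfl, hcost, rfl⟩
  exact ⟨γ.snd, inferInstance, (wassersteinDist_snd_fst_le_transportCost p γ).trans hcost,
    (integral_map measurable_snd.aemeasurable hLc.aestronglyMeasurable).symm⟩

lemma mixture_mem_couplingObjectives {p ρ : ℝ} (hp : 0 < p) {L : ℝⁿ → ℝ} (hLc : Continuous L)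
    {C : ℝ} (hLb : ∀ x, |L x| ≤ C) {Q Q' : Measure ℝⁿ} [IsProbabilityMeasure Q]
    [IsProbabilityMeasure Q'] {γ : Measure (ℝⁿ × ℝⁿ)} (hγQ : γ.fst = Q) (hγQ' : γ.snd = Q')
    {t : ℝ} (ht0 : 0 ≤ t) (ht1 : t ≤ 1)
    (hcost : ENNReal.ofReal t ^ (1 / p) * transportCost p γ ≤ ENNReal.ofReal ρ) :
    t * ∫ x, L x ∂Q' + (1 - t) * ∫ x, L x ∂Q ∈ couplingObjectives Q p ρ L := by
  have hL (μ : Measure ℝⁿ) [IsFiniteMeasure μ] : Integrable L μ :=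
    .of_bound hLc.aestronglyMeasurable C (ae_of_all _ hLb)
  let γt := ENNReal.ofReal t • γ + (ENNReal.ofReal (1 - t) • Q).map fun x => (x, x)
  have hfst : γt.fst = Q := by
    rw [Measure.fst_add, Measure.fst_smul, Measure.fst_map_diag, hγQ, ← add_smul,
      ← ENNReal.ofReal_add ht0 (by linarith), add_sub_cancel, ENNReal.ofReal_one, one_smul]
  have hsnd : γt.snd = ENNReal.ofReal t • Q' + ENNReal.ofReal (1 - t) • Q := by
    rw [Measure.snd_add, Measure.snd_smul, Measure.snd_map_diag, hγQ']
  refine ⟨γt, isProbabilityMeasure_of_fst_eq hfst, hfst, ?_, ?_⟩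
  · rwa [transportCost_add_map_diag hp, transportCost_smul hp]
  · rw [← integral_map measurable_snd.aemeasurable hLc.aestronglyMeasurable, ← Measure.snd, hsnd,
      integral_add_measure ((hL Q').smul_measure ENNReal.ofReal_ne_top)
        ((hL Q).smul_measure ENNReal.ofReal_ne_top),
      integral_smul_measure, integral_smul_measure, ENNReal.toReal_ofReal ht0,
      ENNReal.toReal_ofReal (by linarith), smul_eq_mul, smul_eq_mul]

lemma integral_mem_couplingObjectives {p : ℝ} (hp : 0 < p) {L : ℝⁿ → ℝ} (hLc : Continuous L)
    {C : ℝ} (hLb : ∀ x, |L x| ≤ C) (Q : Measure ℝⁿ) [IsProbabilityMeasure Q] (ρ : ℝ) :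
    ∫ x, L x ∂Q ∈ couplingObjectives Q p ρ L := by
  simpa using mixture_mem_couplingObjectives hp hLc hLb (Measure.fst_map_diag Q)
    (Measure.snd_map_diag Q) le_rfl zero_le_one (ρ := ρ) (by simp [ENNReal.zero_rpow_of_pos, hp])

lemma mixture_mem_couplingObjectives_of_wassersteinDist_le {p ρ : ℝ} (hp : 0 < p) (hρ : 0 < ρ)
    {L : ℝⁿ → ℝ} (hLc : Continuous L) {C : ℝ} (hLb : ∀ x, |L x| ≤ C) {Q Q' : Measure ℝⁿ}
    [IsProbabilityMeasure Q] [IsProbabilityMeasure Q']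
    (hW : wassersteinDist p Q' Q ≤ ENNReal.ofReal ρ) {t : ℝ} (ht0 : 0 < t) (ht1 : t < 1) :
    t * ∫ x, L x ∂Q' + (1 - t) * ∫ x, L x ∂Q ∈ couplingObjectives Q p ρ L := by
  set s := ENNReal.ofReal t ^ (1 / p)
  have hs1 : s < 1 := ENNReal.rpow_lt_one (by simpa using ht1) (by positivity)
  have hρs : ENNReal.ofReal ρ < ENNReal.ofReal ρ / s := by
    have hρ0 : ENNReal.ofReal ρ ≠ 0 := by simpa using hρ
    refine (ENNReal.lt_div_iff_mul_lt (Or.inr ENNReal.ofReal_ne_top) (Or.inl hs1.ne_top)).2 ?_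
    exact ENNReal.mul_lt_of_lt_div' (by rwa [ENNReal.div_self hρ0 ENNReal.ofReal_ne_top])
  obtain ⟨γ, hγQ', hγQ, hγ⟩ := exists_transportCost_lt_of_wassersteinDist_lt (hW.trans_lt hρs)
  refine mixture_mem_couplingObjectives hp hLc hLb (γ := γ.map Prod.swap)
    (by rwa [Measure.fst_map_swap]) (by rwa [Measure.snd_map_swap]) ht0.le ht1.le ?_
  rw [transportCost_map_swap]
  exact ENNReal.mul_le_of_le_div' hγ.le

lemma integral_le_sSup_couplingObjectives {p ρ : ℝ} (hp : 1 ≤ p) {L : ℝⁿ → ℝ}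
    (hLc : Continuous L) {C : ℝ} (hLb : ∀ x, |L x| ≤ C) {Q Q' : Measure ℝⁿ}
    [IsProbabilityMeasure Q] [IsProbabilityMeasure Q']
    (hW : wassersteinDist p Q' Q ≤ ENNReal.ofReal ρ) :
    ∫ x, L x ∂Q' ≤ sSup (couplingObjectives Q p ρ L) := by
  have hp0 : 0 < p := zero_lt_one.trans_le hp
  have hbdd := bddAbove_couplingObjectives hLb Q p ρ
  rcases le_or_gt ρ 0 with hρ | hρ
  · obtain rfl : Q' = Q := eq_of_wassersteinDist_eq_zero hp
      (le_antisymm (hW.trans_eq (ENNReal.ofReal_eq_zero.2 hρ)) zero_le)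
    exact le_csSup hbdd (integral_mem_couplingObjectives hp0 hLc hLb Q' ρ)
  · have hcont : Continuous fun t : ℝ => t * ∫ x, L x ∂Q' + (1 - t) * ∫ x, L x ∂Q := by
      fun_prop
    have hlim : Tendsto (fun t : ℝ => t * ∫ x, L x ∂Q' + (1 - t) * ∫ x, L x ∂Q) (𝓝[<] 1)
        (𝓝 (∫ x, L x ∂Q')) := by
      simpa using (hcont.tendsto 1).mono_left nhdsWithin_le_nhds
    refine le_of_tendsto hlim ?_
    filter_upwards [Ioo_mem_nhdsLT zero_lt_one] with t ⟨ht0, ht1⟩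
    exact le_csSup hbdd
      (mixture_mem_couplingObjectives_of_wassersteinDist_le hp0 hρ hLc hLb hW ht0 ht1)

end Transport

theorem dr_sup_eq_sup_over_couplings_general {n : ℕ}
    (Q : Measure (EuclideanSpace ℝ (Fin n))) [IsProbabilityMeasure Q]
    (p ρ : ℝ) (hp : 1 ≤ p)
    (L : EuclideanSpace ℝ (Fin n) → ℝ) (hLc : Continuous L)
    (C : ℝ) (hLb : ∀ x, |L x| ≤ C) :
    sSup {r : ℝ | ∃ Q' : Measure (EuclideanSpace ℝ (Fin n)), IsProbabilityMeasure Q' ∧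
        wassersteinDist p Q' Q ≤ ENNReal.ofReal ρ ∧ r = ∫ x, L x ∂Q'} =
    sSup {r : ℝ | ∃ γ : Measure (EuclideanSpace ℝ (Fin n) × EuclideanSpace ℝ (Fin n)),
        IsProbabilityMeasure γ ∧ γ.fst = Q ∧ transportCost p γ ≤ ENNReal.ofReal ρ ∧
        r = ∫ z, L z.2 ∂γ} := by
  change sSup (wassersteinBallObjectives Q p ρ L) = sSup (couplingObjectives Q p ρ L)
  have hsub := couplingObjectives_subset_wassersteinBallObjectives hLc Q p ρ
  have hne : (couplingObjectives Q p ρ L).Nonempty :=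
    ⟨_, integral_mem_couplingObjectives (zero_lt_one.trans_le hp) hLc hLb Q ρ⟩
  refine le_antisymm (csSup_le (hne.mono hsub) ?_)
    (csSup_le_csSup (bddAbove_wassersteinBallObjectives hLb Q p ρ) hne hsub)
  rintro _ ⟨Q', _, hW, rfl⟩
  exact integral_le_sSup_couplingObjectives hp hLc hLb hW

/-- The Wasserstein-ball distributionally robust objective equals the optimization
over couplings with bounded transport cost. -/
theorem dr_sup_eq_sup_over_couplings {n : ℕ}
    (Q : Measure (EuclideanSpace ℝ (Fin n))) [IsProbabilityMeasure Q]
    (p ρ : ℝ) (hp : 1 ≤ p) (hρ : 0 ≤ ρ)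
    (L : EuclideanSpace ℝ (Fin n) → ℝ) (hLc : Continuous L)
    (C : ℝ) (hLb : ∀ x, |L x| ≤ C) :
    sSup {r : ℝ | ∃ Q' : Measure (EuclideanSpace ℝ (Fin n)), IsProbabilityMeasure Q' ∧
        wassersteinDist p Q' Q ≤ ENNReal.ofReal ρ ∧ r = ∫ x, L x ∂Q'} =
    sSup {r : ℝ | ∃ γ : Measure (EuclideanSpace ℝ (Fin n) × EuclideanSpace ℝ (Fin n)),
        IsProbabilityMeasure γ ∧ γ.fst = Q ∧ transportCost p γ ≤ ENNReal.ofReal ρ ∧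
        r = ∫ z, L z.2 ∂γ} :=
  dr_sup_eq_sup_over_couplings_general Q p ρ hp L hLc C hLb
end

section
/- Fix θ₀ ∈ ℝ^n and ρ > 0, let d_ρ : ℝ^n → [0, ∞] be the truncated cost d_ρ(x) = ‖x − θ₀‖₂ if ‖x − θ₀‖₂ ≤ ρ and d_ρ(x) = +∞ otherwise, and let L : ℝ^n → ℝ be measurable and bounded. Then the supremum, over all Borel probability measures Q̃ on ℝ^n satisfying ∫ d_ρ dQ̃ ≤ ρ (in [0, ∞]), of ∫ L dQ̃ equals sup over the closed ball {θ̃ : ‖θ̃ − θ₀‖₂ ≤ ρ} of L(θ̃). (Since the unique coupling of Q̃ with the Dirac measure δ_{θ₀} is the product measure, ∫ d_ρ dQ̃ is exactly the optimal-transport cost W_{d_ρ}(Q̃, δ_{θ₀}), so this states that distributional robustness over the W_{d_ρ}-ball around δ_{θ₀} reduces to the sharpness-aware minimization (SAM) inner maximization.) -/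
open MeasureTheory
open scoped ENNReal

/-- The truncated cost `d_ρ(x) = ‖x − θ₀‖₂` if `‖x − θ₀‖₂ ≤ ρ` and `+∞` otherwise. -/
noncomputable def truncCost {n : ℕ} (θ₀ : EuclideanSpace ℝ (Fin n)) (ρ : ℝ)
    (x : EuclideanSpace ℝ (Fin n)) : ℝ≥0∞ :=
  if ‖x - θ₀‖ ≤ ρ then ENNReal.ofReal ‖x - θ₀‖ else ⊤

/-!
The infinite penalty outside `B_ρ(θ₀)` makes a probability measure feasible exactly when it is
concentrated on the ball, and then its cost is automatically at most `ρ`. So the left-hand side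
is the supremum of `∫ L dQ̃` over probability measures carried by the ball: each such integral is
at most `sup_{B_ρ(θ₀)} L`, and the Dirac masses at points of the ball attain every value of `L`
there.
-/

section IntegralOverSet

variable {α : Type*} [MeasurableSpace α] {f : α → ℝ} {s : Set α}

theorem integral_le_sSup_image_of_ae_mem {μ : Measure α} [IsProbabilityMeasure μ]
    (hf : Integrable f μ) (hbdd : BddAbove (f '' s)) (hs : ∀ᵐ x ∂μ, x ∈ s) :
    ∫ x, f x ∂μ ≤ sSup (f '' s) :=
  calc ∫ x, f x ∂μ ≤ ∫ _, sSup (f '' s) ∂μ :=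
        integral_mono_ae hf (integrable_const _)
          (hs.mono fun x hx => le_csSup hbdd ⟨x, hx, rfl⟩)
    _ = sSup (f '' s) := by simp

theorem sSup_integral_of_ae_mem_eq_sSup_image {C : ℝ} (hf : Measurable f)
    (hfC : ∀ x ∈ s, |f x| ≤ C) (hs : MeasurableSet s) (hne : s.Nonempty) :
    sSup {r : ℝ | ∃ Q : Measure α, IsProbabilityMeasure Q ∧ (∀ᵐ x ∂Q, x ∈ s) ∧
        r = ∫ x, f x ∂Q} = sSup (f '' s) := by
  set S := {r : ℝ | ∃ Q : Measure α, IsProbabilityMeasure Q ∧ (∀ᵐ x ∂Q, x ∈ s) ∧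
    r = ∫ x, f x ∂Q}
  have hbdd : BddAbove (f '' s) := ⟨C, by rintro _ ⟨x, hx, rfl⟩; exact (abs_le.1 (hfC x hx)).2⟩
  have himage : f '' s ⊆ S := Set.image_subset_iff.2 fun x hx =>
    ⟨Measure.dirac x, inferInstance, (ae_dirac_iff hs).2 hx,
      (integral_dirac' f x hf.stronglyMeasurable).symm⟩
  have hle : ∀ r ∈ S, r ≤ sSup (f '' s) := by
    rintro _ ⟨Q, hQ, hQs, rfl⟩
    have hint : Integrable f Q := .of_bound hf.aestronglyMeasurable C (hQs.mono hfC)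
    exact integral_le_sSup_image_of_ae_mem hint hbdd hQs
  exact le_antisymm (csSup_le ((hne.image f).mono himage) hle)
    (csSup_le_csSup ⟨_, hle⟩ (hne.image f) himage)

end IntegralOverSet

section TruncCost

variable {n : ℕ} {θ₀ : EuclideanSpace ℝ (Fin n)} {ρ : ℝ}

theorem measurable_truncCost : Measurable (truncCost θ₀ ρ) :=
  Measurable.ite (measurableSet_le (by fun_prop) measurable_const) (by fun_prop) measurable_const

theorem truncCost_lt_top_iff {x : EuclideanSpace ℝ (Fin n)} :
    truncCost θ₀ ρ x < ⊤ ↔ x ∈ Metric.closedBall θ₀ ρ := by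
  rw [Metric.mem_closedBall, dist_eq_norm, truncCost]
  split_ifs with h <;> simp [h]

theorem lintegral_truncCost_le_iff {Q : Measure (EuclideanSpace ℝ (Fin n))}
    [IsProbabilityMeasure Q] :
    ∫⁻ x, truncCost θ₀ ρ x ∂Q ≤ ENNReal.ofReal ρ ↔ ∀ᵐ x ∂Q, x ∈ Metric.closedBall θ₀ ρ := by
  refine ⟨fun h => ?_, fun h => ?_⟩
  · filter_upwards [ae_lt_top' measurable_truncCost.aemeasurable
      (ne_top_of_le_ne_top ENNReal.ofReal_ne_top h)] with x hx
    exact truncCost_lt_top_iff.1 hx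
  · calc ∫⁻ x, truncCost θ₀ ρ x ∂Q ≤ ∫⁻ _, ENNReal.ofReal ρ ∂Q := by
          refine lintegral_mono_ae (h.mono fun x hx => ?_)
          rw [Metric.mem_closedBall, dist_eq_norm] at hx
          rw [truncCost, if_pos hx]
          exact ENNReal.ofReal_le_ofReal hx
      _ = ENNReal.ofReal ρ := by simp

end TruncCost

/-- Distributional robustness over the `W_{d_ρ}`-ball around the Dirac measure `δ_{θ₀}`
reduces to the SAM inner maximization: the supremum of `∫ L dQ̃` over Borel probability
measures with `∫ d_ρ dQ̃ ≤ ρ` equals the supremum of `L` over the closed ball `B_ρ(θ₀)`. -/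
theorem dr_truncCost_ball_eq_sam {n : ℕ}
    (θ₀ : EuclideanSpace ℝ (Fin n)) (ρ : ℝ) (hρ : 0 < ρ)
    (L : EuclideanSpace ℝ (Fin n) → ℝ) (hL : Measurable L) (C : ℝ) (hLC : ∀ x, |L x| ≤ C) :
    sSup {r : ℝ | ∃ Q' : Measure (EuclideanSpace ℝ (Fin n)), IsProbabilityMeasure Q' ∧
        (∫⁻ x, truncCost θ₀ ρ x ∂Q') ≤ ENNReal.ofReal ρ ∧ r = ∫ x, L x ∂Q'} =
      sSup (L '' Metric.closedBall θ₀ ρ) := by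
  have hfeasible : {r : ℝ | ∃ Q' : Measure (EuclideanSpace ℝ (Fin n)), IsProbabilityMeasure Q' ∧
        (∫⁻ x, truncCost θ₀ ρ x ∂Q') ≤ ENNReal.ofReal ρ ∧ r = ∫ x, L x ∂Q'} =
      {r : ℝ | ∃ Q' : Measure (EuclideanSpace ℝ (Fin n)), IsProbabilityMeasure Q' ∧
        (∀ᵐ x ∂Q', x ∈ Metric.closedBall θ₀ ρ) ∧ r = ∫ x, L x ∂Q'} :=
    Set.ext fun _ => exists_congr fun _ =>
      and_congr_right fun _ => and_congr_left' lintegral_truncCost_le_iff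
  rw [hfeasible]
  exact sSup_integral_of_ae_mem_eq_sSup_image hL (fun x _ => hLC x) measurableSet_closedBall
    ⟨θ₀, Metric.mem_closedBall_self hρ.le⟩
end
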